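/- Let H be a real Hilbert space, x ∈ H, and let f : H → ℝ be Lipschitz with some constant L on the open ball of radius ε̄ > 0 around x. Then for every ε ∈ [0, ε̄), the Goldstein ε-subdifferential ∂_ε f(x) is nonempty, convex, and compact in the weak topology on H. -/

import Mathlib

open Filter Topology RealInnerProductSpace

/-- Clarke generalized directional derivative
`f°(x;v) = limsup_{y→x, t↓0} (f(y+tv) − f(y))/t`. -/
noncomputable def clarkeDir {H : Type*} [NormedAddCommGroup H] [InnerProductSpace ℝ H]
    (f : H → ℝ) (x v : H) : ℝ :=
  limsup (fun p : H × ℝ => (f (p.1 + p.2 • v) - f p.1) / p.2)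
    ((𝓝 x) ×ˢ (𝓝[>] (0 : ℝ)))

/-- Clarke subdifferential, with the dual of `H` identified with `H` via the Riesz map:
`∂f(x) = {w : ⟪w, v⟫ ≤ f°(x;v) for all v}`. -/
def clarkeSubdiff {H : Type*} [NormedAddCommGroup H] [InnerProductSpace ℝ H]
    (f : H → ℝ) (x : H) : Set H :=
  {w : H | ∀ v : H, ⟪w, v⟫ ≤ clarkeDir f x v}

/-- Goldstein ε-subdifferential
`∂_ε f(x) = closure (convexHull (⋃_{y ∈ closedBall x ε} ∂f(y)))`. -/
def goldsteinSubdiff {H : Type*} [NormedAddCommGroup H] [InnerProductSpace ℝ H]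
    (f : H → ℝ) (ε : ℝ) (x : H) : Set H :=
  closure (convexHull ℝ (⋃ y ∈ Metric.closedBall x ε, clarkeSubdiff f y))

/-- `f` is locally Lipschitz near `x`: Lipschitz on some open ball around `x`. -/
def LocallyLipschitzNear {H : Type*} [NormedAddCommGroup H]
    (f : H → ℝ) (x : H) : Prop :=
  ∃ ε > 0, ∃ L : NNReal, LipschitzOnWith L f (Metric.ball x ε)

/-- Multiobjective ε-subdifferential `F_ε(x) = closure (convexHull (⋃ i, ∂_ε f_i(x)))`. -/
def multiSubdiff {H : Type*} [NormedAddCommGroup H] [InnerProductSpace ℝ H]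
    {k : ℕ} (f : Fin k → H → ℝ) (ε : ℝ) (x : H) : Set H :=
  closure (convexHull ℝ (⋃ i : Fin k, goldsteinSubdiff (f i) ε x))

/-- The weak topology on `H`: the topology induced by the functionals `⟪·, v⟫`, `v : H`. -/
noncomputable def weakTopology (H : Type*) [NormedAddCommGroup H] [InnerProductSpace ℝ H] :
    TopologicalSpace H :=
  ⨅ v : H, TopologicalSpace.induced (fun x : H => ⟪x, v⟫) inferInstance

/-!
Near every point `y` of the ball, the Lipschitz bound controls the difference quotients, so
`v ↦ f°(y;v)` is a real-valued sublinear functional bounded by `L‖v‖`. Hahn–Banach gives a linear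
minorant, which the Riesz map turns into an element of `∂f(y)`; every such element has norm at
most `L`. Hence `∂_ε f(x)` is a nonempty, closed, convex subset of the ball of radius `L`. Closed
convex sets are weakly closed by Hahn–Banach separation, and via the Riesz map the weak topology of
`H` is the weak-* topology of its dual, in which closed balls are compact by Banach–Alaoglu.
-/

open Metric Set

section ClarkeFilter

variable {X : Type*} [TopologicalSpace X]

def clarkeFilter (y : X) : Filter (X × ℝ) := 𝓝 y ×ˢ 𝓝[>] (0 : ℝ)

instance (y : X) : (clarkeFilter y).NeBot := by
  unfold clarkeFilter; infer_instance

theorem map_clarkeFilter_rescale (y : X) {c : ℝ} (hc : 0 < c) :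
    map (fun p : X × ℝ => (p.1, c * p.2)) (clarkeFilter y) = clarkeFilter y := by
  have hmul : map (c * ·) (𝓝[>] (0 : ℝ)) = 𝓝[>] 0 := by
    rw [map_eq_comap_of_inverse (n := (c⁻¹ * ·)), comap_mulLeft_nhdsGT_zero (inv_pos.2 hc)]
    · ext t; simp [hc.ne']
    · ext t; simp [hc.ne']
  calc map (fun p : X × ℝ => (p.1, c * p.2)) (clarkeFilter y)
      = map id (𝓝 y) ×ˢ map (c * ·) (𝓝[>] (0 : ℝ)) := (prod_map_map_eq (m₁ := id)).symm
    _ = clarkeFilter y := by rw [map_id, hmul, clarkeFilter]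

end ClarkeFilter

section DifferenceQuotient

variable {H : Type*} [NormedAddCommGroup H] [NormedSpace ℝ H]

noncomputable def diffQuot (f : H → ℝ) (v : H) (p : H × ℝ) : ℝ :=
  (f (p.1 + p.2 • v) - f p.1) / p.2

theorem tendsto_clarkeFilter_translate (y v : H) :
    Tendsto (fun p : H × ℝ => (p.1 + p.2 • v, p.2)) (clarkeFilter y) (clarkeFilter y) := by
  refine Tendsto.prodMk ?_ tendsto_snd
  have hx : Tendsto (fun p : H × ℝ => p.1) (clarkeFilter y) (𝓝 y) := tendsto_fst
  have ht : Tendsto (fun p : H × ℝ => p.2) (clarkeFilter y) (𝓝 0) :=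
    tendsto_snd.mono_right nhdsWithin_le_nhds
  simpa using hx.add (ht.smul_const v)

theorem diffQuot_add (f : H → ℝ) (v w : H) (p : H × ℝ) :
    diffQuot f (v + w) p = diffQuot f w (p.1 + p.2 • v, p.2) + diffQuot f v p := by
  simp only [diffQuot, smul_add, ← add_assoc]
  ring

theorem diffQuot_smul (f : H → ℝ) (v : H) {c : ℝ} (hc : c ≠ 0) (p : H × ℝ) :
    diffQuot f (c • v) p = c * diffQuot f v (p.1, c * p.2) := by
  simp only [diffQuot, smul_smul, mul_comm p.2 c]
  rcases eq_or_ne p.2 0 with ht | ht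
  · simp [ht]
  · field_simp

variable {f : H → ℝ} {U : Set H} {L : NNReal} {y : H}

theorem eventually_abs_diffQuot_le (hf : LipschitzOnWith L f U) (hU : U ∈ 𝓝 y) (v : H) :
    ∀ᶠ p in clarkeFilter y, |diffQuot f v p| ≤ L * ‖v‖ := by
  have hbase : ∀ᶠ p in clarkeFilter y, p.1 ∈ U := tendsto_fst.eventually hU
  have htrans : ∀ᶠ p in clarkeFilter y, p.1 + p.2 • v ∈ U :=
    (tendsto_fst.comp (tendsto_clarkeFilter_translate y v)).eventually hU
  have hpos : ∀ᶠ p in clarkeFilter y, 0 < p.2 := tendsto_snd.eventually self_mem_nhdsWithin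
  filter_upwards [hbase, htrans, hpos] with p hp₁ hp₂ ht
  have hlip := hf.dist_le_mul _ hp₂ _ hp₁
  rw [Real.dist_eq, dist_self_add_left, norm_smul, Real.norm_of_nonneg ht.le] at hlip
  rw [diffQuot, abs_div, abs_of_pos ht, div_le_iff₀ ht]
  linarith

theorem isBoundedUnder_abs_diffQuot (hf : LipschitzOnWith L f U) (hU : U ∈ 𝓝 y) (v : H) :
    IsBoundedUnder (· ≤ ·) (clarkeFilter y) fun p => |diffQuot f v p| :=
  isBoundedUnder_of_eventually_le (eventually_abs_diffQuot_le hf hU v)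

end DifferenceQuotient

section ClarkeDirectionalDerivative

variable {H : Type*} [NormedAddCommGroup H] [InnerProductSpace ℝ H]
  {f : H → ℝ} {U : Set H} {L : NNReal} {y : H}

theorem clarkeDir_eq_limsup (f : H → ℝ) (y v : H) :
    clarkeDir f y v = limsup (diffQuot f v) (clarkeFilter y) := rfl

theorem abs_clarkeDir_le (hf : LipschitzOnWith L f U) (hU : U ∈ 𝓝 y) (v : H) :
    |clarkeDir f y v| ≤ L * ‖v‖ := by
  have hbd := eventually_abs_diffQuot_le hf hU v
  have hle : ∀ᶠ p in clarkeFilter y, diffQuot f v p ≤ L * ‖v‖ := hbd.mono fun _ h => (abs_le.1 h).2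
  have hge : ∀ᶠ p in clarkeFilter y, -(L * ‖v‖) ≤ diffQuot f v p :=
    hbd.mono fun _ h => (abs_le.1 h).1
  rw [abs_le, clarkeDir_eq_limsup]
  exact ⟨le_limsup_of_frequently_le hge.frequently (isBoundedUnder_of_eventually_le hle),
    limsup_le_of_le (isBoundedUnder_of_eventually_ge hge).isCoboundedUnder_le hle⟩

theorem clarkeDir_add_le (hf : LipschitzOnWith L f U) (hU : U ∈ 𝓝 y) (v w : H) :
    clarkeDir f y (v + w) ≤ clarkeDir f y v + clarkeDir f y w := by
  set m := fun p : H × ℝ => (p.1 + p.2 • v, p.2)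
  have hm : Tendsto m (clarkeFilter y) (clarkeFilter y) := tendsto_clarkeFilter_translate y v
  obtain ⟨hv_le, hv_ge⟩ := isBoundedUnder_le_abs.1 (isBoundedUnder_abs_diffQuot hf hU v)
  obtain ⟨hw_le, hw_ge⟩ := isBoundedUnder_le_abs.1 (isBoundedUnder_abs_diffQuot hf hU w)
  have hwm_ge := hm.isBoundedUnder_comp hw_ge
  have hwm : limsup (diffQuot f w ∘ m) (clarkeFilter y) ≤ clarkeDir f y w := by
    rw [limsup_comp]
    exact limsup_le_limsup_of_le hm hwm_ge.isCoboundedUnder_le hw_le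
  calc clarkeDir f y (v + w)
      = limsup (diffQuot f w ∘ m + diffQuot f v) (clarkeFilter y) := by
        rw [clarkeDir_eq_limsup]
        congr 1
        funext p
        exact diffQuot_add f v w p
    _ ≤ limsup (diffQuot f w ∘ m) (clarkeFilter y) + clarkeDir f y v :=
        limsup_add_le hwm_ge (hm.isBoundedUnder_comp hw_le) hv_ge.isCoboundedUnder_le hv_le
    _ ≤ clarkeDir f y v + clarkeDir f y w := by linarith

theorem clarkeDir_smul (hf : LipschitzOnWith L f U) (hU : U ∈ 𝓝 y) (v : H) {c : ℝ}
    (hc : 0 < c) : clarkeDir f y (c • v) = c * clarkeDir f y v := by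
  set n := fun p : H × ℝ => (p.1, c * p.2)
  have hn : map n (clarkeFilter y) = clarkeFilter y := map_clarkeFilter_rescale y hc
  have hn' : Tendsto n (clarkeFilter y) (clarkeFilter y) := hn.le
  have hfun : diffQuot f (c • v) = fun p => c * (diffQuot f v ∘ n) p :=
    funext (diffQuot_smul f v hc.ne')
  obtain ⟨hv_le, hv_ge⟩ := isBoundedUnder_le_abs.1 (isBoundedUnder_abs_diffQuot hf hU v)
  obtain ⟨hcv_le, hcv_ge⟩ := isBoundedUnder_le_abs.1 (isBoundedUnder_abs_diffQuot hf hU (c • v))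
  rw [hfun] at hcv_le hcv_ge
  calc clarkeDir f y (c • v)
      = limsup (fun p => c * (diffQuot f v ∘ n) p) (clarkeFilter y) := by
        rw [clarkeDir_eq_limsup, hfun]
    _ = c * limsup (diffQuot f v ∘ n) (clarkeFilter y) :=
        ((OrderIso.mulLeft₀ c hc).limsup_apply (hn'.isBoundedUnder_comp hv_le)
          (hn'.isBoundedUnder_comp hv_ge).isCoboundedUnder_le hcv_le
          hcv_ge.isCoboundedUnder_le).symm
    _ = c * clarkeDir f y v := by rw [limsup_comp, hn, clarkeDir_eq_limsup]

theorem clarkeSubdiff_nonempty [CompleteSpace H] (hf : LipschitzOnWith L f U) (hU : U ∈ 𝓝 y) :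
    (clarkeSubdiff f y).Nonempty := by
  have hzero : clarkeDir f y 0 = 0 := by simpa using abs_clarkeDir_le hf hU (0 : H)
  obtain ⟨g, -, hg⟩ := exists_extension_of_le_sublinear (⟨⊥, 0⟩ : H →ₗ.[ℝ] ℝ)
    (clarkeDir f y) (fun c hc v => clarkeDir_smul hf hU v hc) (clarkeDir_add_le hf hU)
    (fun z => by simp [(Submodule.mem_bot ℝ).1 z.2, hzero])
  have hbound (v : H) : ‖g v‖ ≤ L * ‖v‖ := by
    rw [Real.norm_eq_abs, abs_le]
    have hneg := (hg (-v)).trans (le_abs_self _ |>.trans (abs_clarkeDir_le hf hU (-v)))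
    rw [map_neg, norm_neg] at hneg
    exact ⟨by linarith, (hg v).trans (le_abs_self _ |>.trans (abs_clarkeDir_le hf hU v))⟩
  refine ⟨(InnerProductSpace.toDual ℝ H).symm (g.mkContinuous L hbound), fun v => ?_⟩
  rw [InnerProductSpace.toDual_symm_apply]
  exact hg v

theorem norm_le_of_mem_clarkeSubdiff (hf : LipschitzOnWith L f U) (hU : U ∈ 𝓝 y) {w : H}
    (hw : w ∈ clarkeSubdiff f y) : ‖w‖ ≤ L := by
  have h := (hw w).trans (le_abs_self _ |>.trans (abs_clarkeDir_le hf hU w))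
  rw [real_inner_self_eq_norm_sq] at h
  nlinarith [norm_nonneg w, L.coe_nonneg]

end ClarkeDirectionalDerivative

section WeakTopology

variable {H : Type*} [NormedAddCommGroup H] [InnerProductSpace ℝ H]

theorem continuous_inner_left_weakTopology (v : H) :
    Continuous[weakTopology H, _] fun x => ⟪x, v⟫ :=
  continuous_iInf_dom continuous_induced_dom

theorem weakTopology_eq_induced_innerSL :
    weakTopology H = .induced (fun w => StrongDual.toWeakDual (innerSL ℝ w)) inferInstance := by
  have hweakDual : (inferInstance : TopologicalSpace (WeakDual ℝ H)) =
      .induced (fun g z => topDualPairing ℝ H g z) Pi.topologicalSpace := rfl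
  rw [hweakDual, induced_compose, induced_to_pi]
  rfl

variable [CompleteSpace H]

theorem Convex.isClosed_weakTopology {s : Set H} (hs : Convex ℝ s) (hc : IsClosed s) :
    IsClosed[weakTopology H] s := by
  refine @IsClosed.mk H (weakTopology H) s <|
    (@isOpen_iff_forall_mem_open H (weakTopology H) _).2 fun z hz => ?_
  obtain ⟨φ, u, hφs, hφz⟩ := geometric_hahn_banach_closed_point hs hc hz
  have hφ (x : H) : φ x = ⟪x, (InnerProductSpace.toDual ℝ H).symm φ⟫ := by
    rw [real_inner_comm, InnerProductSpace.toDual_symm_apply]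
  refine ⟨{x | u < φ x}, fun x hx hxs => (hφs x hxs).not_gt hx, ?_, hφz⟩
  simp only [hφ]
  exact @Continuous.isOpen_preimage H ℝ (weakTopology H) _ _
    (continuous_inner_left_weakTopology _) _ isOpen_Ioi

theorem isCompact_weakTopology_closedBall (r : ℝ) :
    @IsCompact H (weakTopology H) (closedBall 0 r) := by
  have hind := @Topology.IsInducing.mk H (WeakDual ℝ H) (weakTopology H) _ _
    weakTopology_eq_induced_innerSL
  refine (@Topology.IsInducing.isCompact_iff H (WeakDual ℝ H) (weakTopology H) _ _ _ hind).2 ?_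
  convert WeakDual.isCompact_closedBall (0 : StrongDual ℝ H) r
  ext φ
  constructor
  · rintro ⟨w, hw, rfl⟩
    simpa using hw
  · intro hφ
    refine ⟨(InnerProductSpace.toDual ℝ H).symm (WeakDual.toStrongDual φ), ?_, ?_⟩
    · simpa using hφ
    · refine DFunLike.ext _ _ fun v => ?_
      simp

theorem Convex.isCompact_weakTopology {s : Set H} (hs : Convex ℝ s) (hc : IsClosed s)
    (hb : Bornology.IsBounded s) : @IsCompact H (weakTopology H) s := by
  obtain ⟨r, hr⟩ := hb.subset_closedBall 0
  exact @IsCompact.of_isClosed_subset H (weakTopology H) _ _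
    (isCompact_weakTopology_closedBall r) (hs.isClosed_weakTopology hc) hr

end WeakTopology

section GoldsteinSubdifferential

variable {H : Type*} [NormedAddCommGroup H] [InnerProductSpace ℝ H]
  {f : H → ℝ} {U : Set H} {L : NNReal} {x : H} {ε : ℝ}

theorem convex_goldsteinSubdiff (f : H → ℝ) (ε : ℝ) (x : H) :
    Convex ℝ (goldsteinSubdiff f ε x) :=
  (convex_convexHull ℝ _).closure

theorem isClosed_goldsteinSubdiff (f : H → ℝ) (ε : ℝ) (x : H) :
    IsClosed (goldsteinSubdiff f ε x) :=
  isClosed_closure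

theorem goldsteinSubdiff_subset_closedBall (hf : LipschitzOnWith L f U) (hU : IsOpen U)
    (hxU : closedBall x ε ⊆ U) : goldsteinSubdiff f ε x ⊆ closedBall 0 L := by
  refine closure_minimal (convexHull_min ?_ (convex_closedBall _ _)) isClosed_closedBall
  simp only [iUnion_subset_iff]
  intro y hy w hw
  rw [mem_closedBall_zero_iff]
  exact norm_le_of_mem_clarkeSubdiff hf (hU.mem_nhds (hxU hy)) hw

theorem goldsteinSubdiff_nonempty [CompleteSpace H] (hf : LipschitzOnWith L f U) (hU : U ∈ 𝓝 x)
    (hε : 0 ≤ ε) : (goldsteinSubdiff f ε x).Nonempty := by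
  obtain ⟨w, hw⟩ := clarkeSubdiff_nonempty hf hU
  exact ⟨w, subset_closure (subset_convexHull ℝ _ (mem_biUnion (mem_closedBall_self hε) hw))⟩

end GoldsteinSubdifferential

theorem stmt1_general {H : Type*} [NormedAddCommGroup H] [InnerProductSpace ℝ H] [CompleteSpace H]
    (f : H → ℝ) (x : H) (εbar : ℝ) (L : NNReal)
    (hlip : LipschitzOnWith L f (Metric.ball x εbar))
    (ε : ℝ) (hε0 : 0 ≤ ε) (hε : ε < εbar) :
    (goldsteinSubdiff f ε x).Nonempty ∧ Convex ℝ (goldsteinSubdiff f ε x) ∧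
      @IsCompact H (weakTopology H) (goldsteinSubdiff f ε x) := by
  have hsub : closedBall x ε ⊆ ball x εbar := closedBall_subset_ball hε
  have hbdd : Bornology.IsBounded (goldsteinSubdiff f ε x) :=
    isBounded_closedBall.subset (goldsteinSubdiff_subset_closedBall hlip isOpen_ball hsub)
  have hx : ball x εbar ∈ 𝓝 x := isOpen_ball.mem_nhds (hsub (mem_closedBall_self hε0))
  exact ⟨goldsteinSubdiff_nonempty hlip hx hε0, convex_goldsteinSubdiff f ε x,
    (convex_goldsteinSubdiff f ε x).isCompact_weakTopology (isClosed_goldsteinSubdiff f ε x) hbdd⟩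

/-- If `f` is Lipschitz on the open ball of radius `ε̄` around `x`, then for every
`ε ∈ [0, ε̄)` the Goldstein ε-subdifferential is nonempty, convex and weakly compact. -/
theorem stmt1 {H : Type*} [NormedAddCommGroup H] [InnerProductSpace ℝ H] [CompleteSpace H]
    (f : H → ℝ) (x : H) (εbar : ℝ) (hεbar : 0 < εbar) (L : NNReal)
    (hlip : LipschitzOnWith L f (Metric.ball x εbar))
    (ε : ℝ) (hε0 : 0 ≤ ε) (hε : ε < εbar) :
    (goldsteinSubdiff f ε x).Nonempty ∧ Convex ℝ (goldsteinSubdiff f ε x) ∧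
      @IsCompact H (weakTopology H) (goldsteinSubdiff f ε x) :=
  stmt1_general f x εbar L hlip ε hε0 hε
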